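/- arXiv:1409.7740 — 6 statements merged into one kernel-verified Lean document; each statement's English description precedes it below -/
import Mathlib

section
/- Let ρ and σ be d×d density matrices with all entries of ρ nonzero. Define Q by Q_{jj} = min(σ_{jj}/ρ_{jj}, 1) and Q_{jk} = σ_{jk}/ρ_{jk} for j ≠ k. If (a) the diagonal of ρ UT-majorizes the diagonal of σ, and (b) Q is positive-semidefinite, then there exists a cooling map E with E(ρ) = σ. -/
/-!
Write `r_j = ρ_jj > 0` and `s_j = σ_jj`. Factoring `Q = B Bᴴ`, Schur multiplication by `Q` is given
by the diagonal Kraus operators `diag (B_{·i})`, and the operators `√w_jk |j⟩⟨k|` (`j < k`) add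
`Σ_k w_jk X_kk` to the diagonal. The sum of the two sends `ρ` to `σ` off the diagonal by the choice
of `Q`; on the diagonal, and for the trace, it is right exactly when `t_jk = w_jk r_k` transports
the excesses `(r_k - s_k)⁺` onto the deficiencies `(s_j - r_j)⁺` of lower levels `j < k`.
UT-majorization makes every tail sum of deficiencies at most the corresponding tail sum of
excesses, which is what such a plan needs: tile the same interval by consecutive pieces of lengths
the deficiencies and the excesses, both starting from the top level, and let `t_jk` be the length
of the overlap of the `j`-th deficiency piece with the `k`-th excess piece.
-/

open Finset Matrix
open scoped ComplexOrder

/-- A cooling map: a trace-preserving map admitting a Kraus decomposition into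
diagonal operators and multiples of matrix units `|j⟩⟨k|` with `j < k`. -/
def IsCoolingMap {d : ℕ} (E : Matrix (Fin d) (Fin d) ℂ → Matrix (Fin d) (Fin d) ℂ) : Prop :=
  ∃ (n : ℕ) (lam : Fin d → Fin n → ℂ) (mu : Fin d → Fin d → ℂ),
    (∀ ρ, E ρ =
      (∑ i, (Matrix.diagonal fun j => lam j i) * ρ * (Matrix.diagonal fun j => lam j i)ᴴ) +
      ∑ j, ∑ k, if j < k then
        (mu j k • Matrix.single j k (1 : ℂ)) * ρ *
          (mu j k • Matrix.single j k (1 : ℂ))ᴴ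
      else 0) ∧
    (∀ ρ, (E ρ).trace = ρ.trace)

def intervalOverlap (a b x y : ℝ) : ℝ := max 0 (min b y - max a x)

theorem intervalOverlap_nonneg (a b x y : ℝ) : 0 ≤ intervalOverlap a b x y := le_max_left _ _

theorem intervalOverlap_comm (a b x y : ℝ) : intervalOverlap a b x y = intervalOverlap x y a b := by
  rw [intervalOverlap, intervalOverlap, min_comm b, max_comm a]

theorem intervalOverlap_eq_zero_of_le {a b x y : ℝ} (h : b ≤ x) : intervalOverlap a b x y = 0 :=
  max_eq_left (by linarith [min_le_left b y, le_max_right a x])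

theorem intervalOverlap_eq_sub {a b x y : ℝ} (hab : a ≤ b) (hxy : x ≤ y) :
    intervalOverlap a b x y = min b (max a y) - min b (max a x) := by
  simp only [intervalOverlap, min_def, max_def]
  split_ifs <;> linarith

theorem sum_intervalOverlap_of_antitone {f : ℕ → ℝ} (hf : Antitone f) {a b : ℝ} {n : ℕ}
    (hab : a ≤ b) (ha : f n ≤ a) (hb : b ≤ f 0) :
    ∑ k ∈ range n, intervalOverlap a b (f (k + 1)) (f k) = b - a := by
  rw [sum_congr rfl fun k _ => intervalOverlap_eq_sub hab (hf k.le_succ),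
    sum_range_sub' (fun k => min b (max a (f k))), max_eq_left ha, min_eq_right hab,
    min_eq_left (hb.trans (le_max_right a _))]

theorem exists_transport_of_antitone {d : ℕ} {C E : ℕ → ℝ} (hC : Antitone C) (hE : Antitone E)
    (h0 : C 0 = E 0) (hd : C d = E d) (hCE : ∀ k, C k ≤ E (k + 1)) :
    ∃ t : Fin d → Fin d → ℝ, (∀ j k, 0 ≤ t j k) ∧ (∀ j k, k ≤ j → t j k = 0) ∧
      (∀ j : Fin d, ∑ k, t j k = C j - C (j + 1)) ∧
      (∀ k : Fin d, ∑ j, t j k = E k - E (k + 1)) := by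
  refine ⟨fun j k => intervalOverlap (C (j + 1)) (C j) (E (k + 1)) (E k),
    fun j k => intervalOverlap_nonneg _ _ _ _,
    fun j k hkj => intervalOverlap_eq_zero_of_le ((hC (Fin.le_def.mp hkj)).trans (hCE k)),
    fun j => ?_, fun k => ?_⟩
  · rw [Fin.sum_univ_eq_sum_range (fun k => intervalOverlap _ _ (E (k + 1)) (E k))]
    exact sum_intervalOverlap_of_antitone hE (hC (Nat.le_succ _)) (hd ▸ hC j.is_lt)
      (h0 ▸ hC (Nat.zero_le _))
  · simp only [intervalOverlap_comm (C _)]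
    rw [Fin.sum_univ_eq_sum_range (fun j => intervalOverlap _ _ (C (j + 1)) (C j))]
    exact sum_intervalOverlap_of_antitone hC (hE (Nat.le_succ _)) (hd ▸ hE k.is_lt)
      (h0 ▸ hE (Nat.zero_le _))

section TailSum

variable {d : ℕ}

def tailSum (f : Fin d → ℝ) (m : ℕ) : ℝ := ∑ j : Fin d with m ≤ j.val, f j

theorem tailSum_zero (f : Fin d → ℝ) : tailSum f 0 = ∑ j, f j := by
  simp [tailSum]

theorem tailSum_of_le (f : Fin d → ℝ) {m : ℕ} (hm : d ≤ m) : tailSum f m = 0 :=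
  sum_eq_zero fun j hj => absurd ((mem_filter.mp hj).2.trans_lt j.is_lt) (not_lt.mpr hm)

theorem tailSum_eq_add (f : Fin d → ℝ) {m : ℕ} (hm : m < d) :
    tailSum f m = f ⟨m, hm⟩ + tailSum f (m + 1) := by
  have : univ.filter (fun j : Fin d => m ≤ j) = insert ⟨m, hm⟩ (univ.filter (m + 1 ≤ ·.val)) := by
    ext j
    simp only [mem_filter, mem_univ, true_and, mem_insert, Fin.ext_iff]
    omega
  rw [tailSum, this, sum_insert (by simp), tailSum]

theorem tailSum_antitone {f : Fin d → ℝ} (hf : ∀ j, 0 ≤ f j) : Antitone (tailSum f) :=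
  fun _ _ hmn => sum_le_sum_of_subset_of_nonneg (monotone_filter_right _ fun _ _ => hmn.trans)
    fun j _ _ => hf j

theorem tailSum_sub (f g : Fin d → ℝ) (m : ℕ) :
    tailSum (f - g) m = tailSum f m - tailSum g m :=
  sum_sub_distrib ..

end TailSum

theorem exists_upper_transport {d : ℕ} (s r : Fin d → ℝ) (hsum : ∑ j, s j = ∑ j, r j)
    (htail : ∀ m : Fin d, 1 ≤ m.val →
      ∑ j ∈ univ.filter (fun j => m ≤ j), s j ≤ ∑ j ∈ univ.filter (fun j => m ≤ j), r j) :
    ∃ t : Fin d → Fin d → ℝ, (∀ j k, 0 ≤ t j k) ∧ (∀ j k, k ≤ j → t j k = 0) ∧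
      (∀ j, ∑ k, t j k = s j - min (s j) (r j)) ∧ (∀ k, ∑ j, t j k = r k - min (s k) (r k)) := by
  set c : Fin d → ℝ := fun j => s j - min (s j) (r j)
  set e : Fin d → ℝ := fun j => r j - min (s j) (r j)
  have hc : ∀ j, 0 ≤ c j := fun j => sub_nonneg.mpr (min_le_left _ _)
  have he : ∀ j, 0 ≤ e j := fun j => sub_nonneg.mpr (min_le_right _ _)
  have htail_sub : ∀ m, tailSum c m - tailSum e m = tailSum s m - tailSum r m := fun m => by
    rw [← tailSum_sub, ← tailSum_sub]
    congr 1
    ext j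
    simp only [Pi.sub_apply, c, e, sub_sub_sub_cancel_right]
  have hsr : ∀ m, tailSum s m ≤ tailSum r m := fun m => by
    rcases Nat.eq_zero_or_pos m with rfl | hm
    · rw [tailSum_zero, tailSum_zero, hsum]
    by_cases hmd : m < d
    · exact htail ⟨m, hmd⟩ hm
    · rw [tailSum_of_le _ (not_lt.mp hmd), tailSum_of_le _ (not_lt.mp hmd)]
  have hce : ∀ m, tailSum c m ≤ tailSum e m := fun m => by linarith [htail_sub m, hsr m]
  have h0 : tailSum c 0 = tailSum e 0 := by
    linarith [htail_sub 0, tailSum_zero s, tailSum_zero r, hce 0]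
  -- `c` and `e` have disjoint supports, so at each level one of the two tails does not move.
  have hstep : ∀ k, tailSum c k ≤ tailSum e (k + 1) := fun k => by
    by_cases hk : k < d
    · rcases min_choice (s ⟨k, hk⟩) (r ⟨k, hk⟩) with h | h
      · rw [tailSum_eq_add c hk, show c ⟨k, hk⟩ = 0 by simp [c, h], zero_add]
        exact hce (k + 1)
      · rw [← zero_add (tailSum e (k + 1)), ← show e ⟨k, hk⟩ = 0 by simp [e, h],
          ← tailSum_eq_add e hk]
        exact hce k
    · rw [tailSum_of_le c (not_lt.mp hk), tailSum_of_le e (by omega)]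
  obtain ⟨t, ht0, ht_upper, hrow, hcol⟩ :=
    exists_transport_of_antitone (tailSum_antitone hc) (tailSum_antitone he) h0
      (by rw [tailSum_of_le c le_rfl, tailSum_of_le e le_rfl]) hstep
  refine ⟨t, ht0, ht_upper, fun j => ?_, fun k => ?_⟩
  · rw [hrow, tailSum_eq_add c j.is_lt, add_sub_cancel_right]
  · rw [hcol, tailSum_eq_add e k.is_lt, add_sub_cancel_right]

theorem sum_diagonal_mul_mul_conjTranspose_diagonal {m n R : Type*} [Fintype m] [Fintype n]
    [DecidableEq m] [CommSemiring R] [StarRing R] (B : Matrix m n R) (X : Matrix m m R) :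
    ∑ i, diagonal (fun j => B j i) * X * (diagonal fun j => B j i)ᴴ = (B * Bᴴ) ⊙ X := by
  ext a b
  simp only [Matrix.sum_apply, hadamard_apply, diagonal_conjTranspose, mul_diagonal, diagonal_mul]
  simp only [mul_apply, conjTranspose_apply, Finset.sum_mul, Pi.star_apply]
  exact Finset.sum_congr rfl fun i _ => by ring

theorem smul_single_mul_mul_conjTranspose {m R : Type*} [Fintype m] [DecidableEq m]
    [CommSemiring R] [StarRing R] (c : R) (j k : m) (X : Matrix m m R) :
    (c • single j k 1) * X * (c • single j k 1)ᴴ = single j j (c * star c * X k k) := by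
  rw [smul_single, conjTranspose_single, single_mul_mul_single, smul_eq_mul, mul_one]
  ring_nf

theorem exists_eq_mul_conjTranspose_of_posSemidef {n 𝕜 : Type*} [Fintype n] [RCLike 𝕜]
    {G : Matrix n n 𝕜} (hG : G.PosSemidef) : ∃ B : Matrix n n 𝕜, G = B * Bᴴ := by
  classical
  open scoped MatrixOrder in
  obtain ⟨B, rfl⟩ := CStarAlgebra.nonneg_iff_eq_star_mul_self.mp hG.nonneg
  exact ⟨Bᴴ, by rw [conjTranspose_conjTranspose, star_eq_conjTranspose]⟩

theorem trace_hadamard_add_diagonal {n R : Type*} [Fintype n] [DecidableEq n] [CommSemiring R]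
    (G w X : Matrix n n R) :
    trace (G ⊙ X + diagonal fun j => ∑ k, w j k * X k k) = ∑ k, (G k k + ∑ j, w j k) * X k k := by
  simp only [trace, Matrix.diag, Matrix.add_apply, hadamard_apply, diagonal_apply_eq, add_mul,
    Finset.sum_mul, Finset.sum_add_distrib]
  rw [Finset.sum_comm]

theorem isCoolingMap_hadamard_add_diagonal {d : ℕ} (G : Matrix (Fin d) (Fin d) ℂ)
    (hG : G.PosSemidef) (w : Fin d → Fin d → ℝ) (hw : ∀ j k, 0 ≤ w j k)
    (hw_upper : ∀ j k, k ≤ j → w j k = 0) (htr : ∀ k, G k k + ∑ j, (w j k : ℂ) = 1) :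
    IsCoolingMap fun X => G ⊙ X + diagonal fun j => ∑ k, (w j k : ℂ) * X k k := by
  obtain ⟨B, rfl⟩ := exists_eq_mul_conjTranspose_of_posSemidef hG
  refine ⟨d, B, fun j k => (√(w j k) : ℂ), fun X => ?_, fun X => ?_⟩
  · dsimp only
    rw [sum_diagonal_mul_mul_conjTranspose_diagonal, ← sum_single_eq_diagonal]
    congr 1
    refine Finset.sum_congr rfl fun j _ => ?_
    rw [← singleAddMonoidHom_apply, map_sum]
    refine Finset.sum_congr rfl fun k _ => ?_
    rw [singleAddMonoidHom_apply]
    split_ifs with hjk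
    · rw [smul_single_mul_mul_conjTranspose, Complex.star_def, Complex.conj_ofReal,
        ← Complex.ofReal_mul, Real.mul_self_sqrt (hw j k)]
    · simp [hw_upper j k (not_lt.mp hjk)]
  · rw [trace_hadamard_add_diagonal _ (fun j k => (w j k : ℂ))]
    simp only [htr, one_mul]
    rfl

theorem cooling_map_transition_sufficient
    (d : ℕ) (ρ σ : Matrix (Fin d) (Fin d) ℂ)
    (hρ : ρ.PosSemidef) (hρtr : ρ.trace = 1)
    (hσ : σ.PosSemidef) (hσtr : σ.trace = 1)
    (hρne : ∀ j k, ρ j k ≠ 0)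
    (Q : Matrix (Fin d) (Fin d) ℂ)
    (hQ : ∀ j k : Fin d, Q j k =
      if j = k then ((min ((σ j j).re / (ρ j j).re) 1 : ℝ) : ℂ)
      else σ j k / ρ j k)
    (hmaj : ∀ m : Fin d, 1 ≤ m.val →
      ∑ j ∈ univ.filter (fun j => m ≤ j), (σ j j).re ≤
        ∑ j ∈ univ.filter (fun j => m ≤ j), (ρ j j).re)
    (hQpsd : Q.PosSemidef) :
    ∃ E : Matrix (Fin d) (Fin d) ℂ → Matrix (Fin d) (Fin d) ℂ,
      IsCoolingMap E ∧ E ρ = σ := by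
  have hr : ∀ j, 0 < (ρ j j).re := fun j =>
    (Complex.lt_def.mp (hρ.diag_nonneg.lt_of_ne (hρne j j).symm)).1
  obtain ⟨r, hρr⟩ : ∃ r : Fin d → ℝ, ∀ j, ρ j j = r j :=
    ⟨_, fun j => (hρ.isHermitian.coe_re_apply_self j).symm⟩
  obtain ⟨s, hσs⟩ : ∃ s : Fin d → ℝ, ∀ j, σ j j = s j :=
    ⟨_, fun j => (hσ.isHermitian.coe_re_apply_self j).symm⟩
  have hsum : ∑ j, s j = ∑ j, r j := by
    have := congrArg Complex.re (hσtr.trans hρtr.symm)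
    simpa only [trace, Matrix.diag, hρr, hσs, Complex.re_sum, Complex.ofReal_re] using this
  simp only [hρr, hσs, Complex.ofReal_re] at hQ hmaj hr
  obtain ⟨t, ht0, ht_upper, hrow, hcol⟩ := exists_upper_transport s r hsum hmaj
  have hmin : ∀ j, min (s j / r j) 1 = min (s j) (r j) / r j := fun j => by
    rw [← min_div_div_right (hr j).le, div_self (hr j).ne']
  refine ⟨_, isCoolingMap_hadamard_add_diagonal Q hQpsd (fun j k => t j k / r k)
    (fun j k => div_nonneg (ht0 j k) (hr k).le) (fun j k hkj => by simp [ht_upper j k hkj])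
    (fun k => ?_), ?_⟩
  · have : min (s k / r k) 1 + ∑ j, t j k / r k = 1 := by
      rw [← sum_div, hcol, hmin, ← add_div, add_sub_cancel, div_self (hr k).ne']
    rw [hQ, if_pos rfl]
    exact_mod_cast this
  · ext a b
    rcases eq_or_ne a b with rfl | hab
    · have : min (s a / r a) 1 * r a + ∑ k, t a k / r k * r k = s a := by
        simp only [hmin, div_mul_cancel₀ _ (hr _).ne', hrow, add_sub_cancel]
      simp only [Matrix.add_apply, hadamard_apply, diagonal_apply_eq, hQ, if_pos, hρr, hσs]
      exact_mod_cast this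
    · simp [hQ, hab, div_mul_cancel₀ _ (hρne a b)]
end

section
/- Let ρ and σ be d×d density matrices with all entries of ρ nonzero, and suppose there exists a cooling map E with E(ρ) = σ. Then (a) the diagonal of ρ UT-majorizes that of σ, and (b) the matrix Q defined by Q_{jj} = min(σ_{jj}/ρ_{jj}, 1) and Q_{jk} = σ_{jk}/ρ_{jk} (j ≠ k) is positive-semidefinite. -/
/-!
A cooling map acts as `X ↦ q ⊙ X + diag (∑_{k > j} W j k • X k k)`, where `q = L Lᴴ` is the Gram
matrix of the diagonal Kraus operators and `W ≥ 0` collects the decay rates; trace preservation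
reads `q m m + ∑_{j < m} W j m = 1`. Population therefore only flows from higher to lower levels,
so every tail sum of the diagonal can only decrease: this is (a). Off the diagonal `σ = q ⊙ ρ`,
so `Q` agrees with the positive semidefinite `q` there, while on the diagonal
`q j j ≤ min (σ j j / ρ j j) 1`. Hence `Q = q + D` with `D` diagonal and nonnegative, which is (b).
-/

open Finset Matrix
open scoped ComplexOrder

section Populations

variable {ι : Type*} [Fintype ι] [LinearOrder ι]

def coolingDiag (W : ι → ι → ℝ) (p r : ι → ℝ) (j : ι) : ℝ :=
  p j * r j + ∑ k ∈ univ.filter (j < ·), W j k * r k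

variable {W : ι → ι → ℝ} {p r : ι → ℝ}

lemma coolingDiag_eq (hp : ∀ j, p j + ∑ i ∈ univ.filter (· < j), W i j = 1) (j : ι) :
    coolingDiag W p r j = r j - ∑ i ∈ univ.filter (· < j), W i j * r j +
      ∑ k ∈ univ.filter (j < ·), W j k * r k := by
  rw [coolingDiag, ← sum_mul]
  linear_combination r j * hp j

lemma sum_coolingDiag_le (hW : 0 ≤ W) (hr : 0 ≤ r)
    (hp : ∀ j, p j + ∑ i ∈ univ.filter (· < j), W i j = 1) (m : ι) :
    ∑ j ∈ univ.filter (m ≤ ·), coolingDiag W p r j ≤ ∑ j ∈ univ.filter (m ≤ ·), r j := by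
  -- every decay into a level `≥ m` comes from a level `≥ m`
  have hflow : ∑ j ∈ univ.filter (m ≤ ·), ∑ k ∈ univ.filter (j < ·), W j k * r k ≤
      ∑ k ∈ univ.filter (m ≤ ·), ∑ i ∈ univ.filter (· < k), W i k * r k := by
    rw [sum_comm' (t' := univ.filter (m ≤ ·))
      (s' := fun k => univ.filter (fun j => m ≤ j ∧ j < k))
      (by intro j k; simp only [mem_filter, mem_univ, true_and]; grind)]
    refine sum_le_sum fun k _ => sum_le_sum_of_subset_of_nonneg ?_ fun i _ _ => ?_
    · exact fun i => by simp only [mem_filter, mem_univ, true_and]; exact And.right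
    · exact mul_nonneg (hW i k) (hr k)
  simp only [coolingDiag_eq hp, sum_add_distrib, sum_sub_distrib]
  linarith

lemma le_min_coolingDiag_div (hW : 0 ≤ W) (hr : 0 ≤ r)
    (hp : ∀ j, p j + ∑ i ∈ univ.filter (· < j), W i j = 1) {j : ι} (hrj : 0 < r j) :
    p j ≤ min (coolingDiag W p r j / r j) 1 := by
  refine le_min ((le_div_iff₀ hrj).2 ?_) ?_
  · exact le_add_of_nonneg_right (sum_nonneg fun k _ => mul_nonneg (hW j k) (hr k))
  · linarith [hp j, sum_nonneg fun i (_ : i ∈ univ.filter (· < j)) => hW i j]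

end Populations

section KrausTerms

variable {ι : Type*} [Fintype ι] [DecidableEq ι]

lemma sum_diagonal_mul_mul_conjTranspose {κ : Type*} [Fintype κ] (L : Matrix ι κ ℂ)
    (X : Matrix ι ι ℂ) :
    ∑ i, diagonal (fun j => L j i) * X * (diagonal fun j => L j i)ᴴ = (L * Lᴴ) ⊙ X := by
  ext a b
  simp only [Matrix.sum_apply, diagonal_conjTranspose, mul_diagonal, diagonal_mul]
  simp only [hadamard_apply, mul_apply, conjTranspose_apply, sum_mul, Pi.star_apply]
  exact sum_congr rfl fun i _ => by ring

lemma smul_single_mul_mul_conjTranspose_s9 (c : ℂ) (j k : ι) (X : Matrix ι ι ℂ) :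
    (c • single j k 1) * X * (c • single j k 1)ᴴ =
      single j j ((Complex.normSq c : ℂ) * X k k) := by
  rw [conjTranspose_smul, conjTranspose_single, Matrix.smul_mul, Matrix.smul_mul,
    Matrix.mul_smul, smul_smul, single_mul_mul_single, smul_single, Complex.star_def,
    Complex.mul_conj]
  simp

end KrausTerms

lemma Matrix.PosSemidef.of_diag_le_of_offDiag_eq {ι : Type*} [DecidableEq ι]
    {q Q : Matrix ι ι ℂ} (hq : q.PosSemidef)
    (hdiag : ∀ j, q j j ≤ Q j j) (hoff : ∀ j k, j ≠ k → Q j k = q j k) : Q.PosSemidef := by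
  have hQ : Q = q + diagonal fun j => Q j j - q j j := by
    ext j k
    by_cases hjk : j = k
    · subst hjk; simp
    · simp [hoff j k hjk, hjk]
  rw [hQ]
  exact hq.add (PosSemidef.diagonal fun j => sub_nonneg.2 (hdiag j))

section CoolingForm

variable {ι : Type*} [Fintype ι] [DecidableEq ι] [LinearOrder ι]

def coolingDecay (W : ι → ι → ℝ) (X : Matrix ι ι ℂ) (j : ι) : ℂ :=
  ∑ k ∈ univ.filter (j < ·), (W j k : ℂ) * X k k

/-- The normal form of a cooling map: `q` is the Gram matrix of the diagonal Kraus operators and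
`W j k = |μ_{jk}|²` is the rate of the decay `|k⟩ → |j⟩`. -/
def coolingForm (q : Matrix ι ι ℂ) (W : ι → ι → ℝ) (X : Matrix ι ι ℂ) : Matrix ι ι ℂ :=
  q ⊙ X + diagonal (coolingDecay W X)

lemma sum_sum_ite_single_eq_diagonal (W : ι → ι → ℝ) (X : Matrix ι ι ℂ) :
    (∑ j, ∑ k, if j < k then single j j ((W j k : ℂ) * X k k) else 0) =
      diagonal (coolingDecay W X) := by
  ext a b
  simp only [Matrix.sum_apply, apply_ite (fun M : Matrix ι ι ℂ => M a b), single_apply,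
    Matrix.zero_apply, diagonal_apply, coolingDecay]
  split_ifs with hab
  · subst hab
    rw [sum_filter,
      sum_eq_single a (fun j _ hja => sum_eq_zero fun k _ => by simp [hja]) (by simp)]
    simp
  · exact sum_eq_zero fun j _ => sum_eq_zero fun k _ => by grind

lemma coolingForm_apply_of_ne {q : Matrix ι ι ℂ} {W : ι → ι → ℝ} {X : Matrix ι ι ℂ} {j k : ι}
    (hjk : j ≠ k) : coolingForm q W X j k = q j k * X j k := by
  simp [coolingForm, hjk]

lemma trace_coolingForm_single (q : Matrix ι ι ℂ) (W : ι → ι → ℝ) (m : ι) :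
    (coolingForm q W (single m m 1)).trace = q m m + ∑ j ∈ univ.filter (· < m), (W j m : ℂ) := by
  simp [coolingForm, trace, coolingDecay, single_apply, sum_add_distrib, sum_filter]

lemma re_coolingForm_apply_self {q X : Matrix ι ι ℂ} (hq : q.IsHermitian) (hX : X.IsHermitian)
    (W : ι → ι → ℝ) (j : ι) :
    (coolingForm q W X j j).re = coolingDiag W (fun i => (q i i).re) (fun i => (X i i).re) j := by
  have him : ∀ {A : Matrix ι ι ℂ}, A.IsHermitian → ∀ i, (A i i).im = 0 := fun hA i => by
    rw [← hA.coe_re_apply_self i]; simp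
  simp [coolingForm, coolingDecay, coolingDiag, Complex.re_sum, him hq, him hX]

end CoolingForm

theorem IsCoolingMap.exists_coolingForm {d : ℕ}
    {E : Matrix (Fin d) (Fin d) ℂ → Matrix (Fin d) (Fin d) ℂ} (hE : IsCoolingMap E) :
    ∃ (q : Matrix (Fin d) (Fin d) ℂ) (W : Fin d → Fin d → ℝ), q.PosSemidef ∧ 0 ≤ W ∧
      E = coolingForm q W ∧ ∀ m, (q m m).re + ∑ j ∈ univ.filter (· < m), W j m = 1 := by
  obtain ⟨n, (L : Matrix (Fin d) (Fin n) ℂ), mu, hmap, htr⟩ := hE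
  have hform : E = coolingForm (L * Lᴴ) fun j k => Complex.normSq (mu j k) := by
    funext X
    simp only [hmap, sum_diagonal_mul_mul_conjTranspose, smul_single_mul_mul_conjTranspose_s9,
      coolingForm, ← sum_sum_ite_single_eq_diagonal]
  refine ⟨_, _, posSemidef_self_mul_conjTranspose _, fun j k => Complex.normSq_nonneg _, hform,
    fun m => ?_⟩
  have hm := congrArg Complex.re (htr (single m m 1))
  simpa [hform, trace_coolingForm_single, Complex.re_sum] using hm

theorem cooling_map_transition_necessary_general
    (d : ℕ) (ρ σ : Matrix (Fin d) (Fin d) ℂ)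
    (hρ : ρ.PosSemidef)
    (hρne : ∀ j k, ρ j k ≠ 0)
    (E : Matrix (Fin d) (Fin d) ℂ → Matrix (Fin d) (Fin d) ℂ)
    (hE : IsCoolingMap E) (hEρ : E ρ = σ)
    (Q : Matrix (Fin d) (Fin d) ℂ)
    (hQ : ∀ j k : Fin d, Q j k =
      if j = k then ((min ((σ j j).re / (ρ j j).re) 1 : ℝ) : ℂ)
      else σ j k / ρ j k) :
    (∀ m : Fin d, 1 ≤ m.val →
      ∑ j ∈ univ.filter (fun j => m ≤ j), (σ j j).re ≤
        ∑ j ∈ univ.filter (fun j => m ≤ j), (ρ j j).re) ∧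
    Q.PosSemidef := by
  obtain ⟨q, W, hq, hW, rfl, hp⟩ := hE.exists_coolingForm
  subst hEρ
  have hσ_diag := re_coolingForm_apply_self hq.isHermitian hρ.isHermitian W
  have hρ_pos : ∀ j, 0 < (ρ j j).re := fun j =>
    (Complex.pos_iff.1 (hρ.diag_nonneg.lt_of_ne (hρne j j).symm)).1
  have hρ_nonneg : 0 ≤ fun j => (ρ j j).re := fun j => (hρ_pos j).le
  refine ⟨fun m _ => ?_, hq.of_diag_le_of_offDiag_eq (fun j => ?_) fun j k hjk => ?_⟩
  · simpa only [hσ_diag] using sum_coolingDiag_le hW hρ_nonneg hp m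
  · rw [hQ, if_pos rfl, hσ_diag, ← hq.isHermitian.coe_re_apply_self j]
    exact Complex.real_le_real.2 (le_min_coolingDiag_div hW hρ_nonneg hp (hρ_pos j))
  · rw [hQ, if_neg hjk, coolingForm_apply_of_ne hjk, mul_div_cancel_right₀ _ (hρne j k)]

theorem cooling_map_transition_necessary
    (d : ℕ) (ρ σ : Matrix (Fin d) (Fin d) ℂ)
    (hρ : ρ.PosSemidef) (hρtr : ρ.trace = 1)
    (hσ : σ.PosSemidef) (hσtr : σ.trace = 1)
    (hρne : ∀ j k, ρ j k ≠ 0)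
    (E : Matrix (Fin d) (Fin d) ℂ → Matrix (Fin d) (Fin d) ℂ)
    (hE : IsCoolingMap E) (hEρ : E ρ = σ)
    (Q : Matrix (Fin d) (Fin d) ℂ)
    (hQ : ∀ j k : Fin d, Q j k =
      if j = k then ((min ((σ j j).re / (ρ j j).re) 1 : ℝ) : ℂ)
      else σ j k / ρ j k) :
    (∀ m : Fin d, 1 ≤ m.val →
      ∑ j ∈ univ.filter (fun j => m ≤ j), (σ j j).re ≤
        ∑ j ∈ univ.filter (fun j => m ≤ j), (ρ j j).re) ∧
    Q.PosSemidef :=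
  cooling_map_transition_necessary_general d ρ σ hρ hρne E hE hEρ Q hQ
end

section
/- If a sequence of d×d column-stochastic matrices P(β), parametrized by β > 0, satisfies P(β) g(β) = g(β) where g(β)_j = e^{−β E_j}/Z(β) is the Gibbs distribution for strictly increasing energies E_1 < E_2 < ... < E_d, then in the limit β → ∞ any limit point P of P(β) is upper-triangular (P_{jk} = 0 for j > k). -/
open Finset Filter

theorem gibbs_fixing_limit_upper_triangular
    (d : ℕ) (Ener : Fin d → ℝ) (hE : StrictMono Ener)
    (P : ℝ → Matrix (Fin d) (Fin d) ℝ)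
    (hstoch : ∀ β > (0 : ℝ), (∀ j k, 0 ≤ P β j k) ∧ (∀ k, ∑ j, P β j k = 1))
    (hfix : ∀ β > (0 : ℝ),
      (P β).mulVec (fun j => Real.exp (-β * Ener j) / ∑ i, Real.exp (-β * Ener i)) =
        fun j => Real.exp (-β * Ener j) / ∑ i, Real.exp (-β * Ener i))
    (Plim : Matrix (Fin d) (Fin d) ℝ)
    (b : ℕ → ℝ) (hb : Tendsto b atTop atTop)
    (hconv : ∀ j k, Tendsto (fun m => P (b m) j k) atTop (nhds (Plim j k))) :
    ∀ j k : Fin d, k < j → Plim j k = 0 := by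
  intro j k hkj
  -- key bound: for β > 0, P β j k ≤ exp (β * (E k - E j))
  have key : ∀ β > (0 : ℝ), P β j k ≤ Real.exp (β * (Ener k - Ener j)) := by
    intro β hβ
    have hZ : (0 : ℝ) < ∑ i, Real.exp (-β * Ener i) := by
      apply Finset.sum_pos (fun i _ => Real.exp_pos _)
      exact ⟨j, Finset.mem_univ j⟩
    have hrow := congrFun (hfix β hβ) j
    simp only [Matrix.mulVec, dotProduct] at hrow
    have hterm : P β j k * (Real.exp (-β * Ener k) / ∑ i, Real.exp (-β * Ener i))
        ≤ Real.exp (-β * Ener j) / ∑ i, Real.exp (-β * Ener i) := by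
      rw [← hrow]
      refine Finset.single_le_sum (f := fun i => P β j i * (Real.exp (-β * Ener i) / ∑ i, Real.exp (-β * Ener i))) (fun i _ => ?_) (Finset.mem_univ k)
      exact mul_nonneg ((hstoch β hβ).1 j i) (le_of_lt (div_pos (Real.exp_pos _) hZ))
    have hek : (0 : ℝ) < Real.exp (-β * Ener k) / ∑ i, Real.exp (-β * Ener i) :=
      div_pos (Real.exp_pos _) hZ
    have := (le_div_iff₀ hek).mpr hterm
    calc P β j k ≤ (Real.exp (-β * Ener j) / ∑ i, Real.exp (-β * Ener i)) /
          (Real.exp (-β * Ener k) / ∑ i, Real.exp (-β * Ener i)) := this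
      _ = Real.exp (-β * Ener j) / Real.exp (-β * Ener k) := by
          rw [div_div_div_cancel_right₀]
          exact ne_of_gt hZ
      _ = Real.exp (β * (Ener k - Ener j)) := by
          rw [← Real.exp_sub]; ring_nf
  have hc : Ener k - Ener j < 0 := sub_neg.mpr (hE hkj)
  have hlim0 : Tendsto (fun m => Real.exp (b m * (Ener k - Ener j))) atTop (nhds 0) :=
    Real.tendsto_exp_atBot.comp (hb.atTop_mul_const_of_neg hc)
  have hev : ∀ᶠ m in atTop, 0 < b m := hb.eventually_gt_atTop 0
  have hle : ∀ᶠ m in atTop, P (b m) j k ≤ Real.exp (b m * (Ener k - Ener j)) :=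
    hev.mono fun m hm => key (b m) hm
  have hge : ∀ᶠ m in atTop, (0 : ℝ) ≤ P (b m) j k :=
    hev.mono fun m hm => (hstoch (b m) hm).1 j k
  have : Tendsto (fun m => P (b m) j k) atTop (nhds 0) :=
    tendsto_of_tendsto_of_tendsto_of_le_of_le' tendsto_const_nhds hlim0 hge hle
  exact tendsto_nhds_unique (hconv j k) this
end

section
/- Let E be a CPTP map on d×d matrices with Kraus operators of the block form K_i = [[η_i, v_i†],[0, L_i]], and let ρ = [[α, x†],[x, A]] be a density matrix with A invertible and output σ = [[β, y†],[y, B]] with B invertible. Then the Schur complements satisfy c_σ := β − y† B^{−1} y ≥ c_ρ := α − x† A^{−1} x. -/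
/-!
Write `c` for the Schur complement of `ρ` and `E` for the matrix unit at the scalar corner.
Since `ρ - c • E` has vanishing Schur complement, it is positive semidefinite. Each Kraus
operator has zero lower-left block, so `K E Kᴴ = |η|² E`, and trace preservation read at
the corner gives `∑ |η_i|² = 1`: the channel fixes `E`. Hence `σ - c • E` is the image of a
positive matrix, so it is positive, i.e. its Schur complement `c_σ - c` is nonnegative.
-/

open Finset Matrix
open scoped ComplexOrder

namespace Matrix

theorem sum_mul_single_mul_conjTranspose {ι n R : Type*} [Fintype ι] [Fintype n]
    [DecidableEq n] [CommSemiring R] [StarRing R] (K : ι → Matrix n n R) (j : n)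
    (hcol : ∀ i k, k ≠ j → K i k j = 0) (htp : ∑ i, (K i)ᴴ * K i = 1) (c : R) :
    ∑ i, K i * single j j c * (K i)ᴴ = single j j c := by
  have hjj : ∑ i, star (K i j j) * K i j j = 1 := by
    have := congrFun (congrFun htp j) j
    simp only [sum_apply, mul_apply, conjTranspose_apply, one_apply_eq] at this
    rw [← this]
    refine Finset.sum_congr rfl fun i _ => ?_
    rw [Fintype.sum_eq_single j fun k hk => by simp [hcol i k hk]]
  ext a b
  simp only [sum_apply, mul_apply, single_apply, ite_and, mul_ite, mul_zero, ite_mul, zero_mul,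
    Finset.sum_ite_eq, Finset.mem_univ, if_true, conjTranspose_apply]
  by_cases ha : a = j
  · by_cases hb : b = j
    · rw [if_pos ha.symm, if_pos hb.symm, ha, hb]
      calc ∑ i, K i j j * c * star (K i j j) = c * ∑ i, star (K i j j) * K i j j := by
            rw [Finset.mul_sum]; exact Finset.sum_congr rfl fun i _ => by ring
        _ = c := by rw [hjj, mul_one]
    · simp [hcol _ b hb, Ne.symm hb]
  · simp [hcol _ a ha, Ne.symm ha]

theorem posSemidef_iff_nonneg_apply_unit (N : Matrix Unit Unit ℂ) :
    N.PosSemidef ↔ 0 ≤ N () () := by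
  have : N = diagonal fun _ => N () () := by ext; simp
  rw [this, posSemidef_diagonal_iff]
  simp

section CornerSchur

variable {n : Type*} [DecidableEq n]

@[simp]
theorem toBlocks₂₂_sub_single_inl (M : Matrix (Unit ⊕ n) (Unit ⊕ n) ℂ) (c : ℂ) :
    (M - single (Sum.inl ()) (Sum.inl ()) c).toBlocks₂₂ = M.toBlocks₂₂ := by
  ext; simp [toBlocks₂₂]

variable [Fintype n]

/-- `α - x† A⁻¹ x` for `M = [[α, x†], [x, A]]`, where `A⁻¹ = 0` if `A` is singular. -/
noncomputable def cornerSchur (M : Matrix (Unit ⊕ n) (Unit ⊕ n) ℂ) : ℂ :=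
  M (.inl ()) (.inl ()) -
    star (fun a => M (.inr a) (.inl ())) ⬝ᵥ M.toBlocks₂₂⁻¹ *ᵥ fun a => M (.inr a) (.inl ())

theorem cornerSchur_sub_single_inl (M : Matrix (Unit ⊕ n) (Unit ⊕ n) ℂ) (c : ℂ) :
    cornerSchur (M - single (Sum.inl ()) (Sum.inl ()) c) = cornerSchur M - c := by
  simp [cornerSchur]
  ring

theorem IsHermitian.posSemidef_iff_cornerSchur_nonneg {M : Matrix (Unit ⊕ n) (Unit ⊕ n) ℂ}
    (hM : M.IsHermitian) (hD : M.toBlocks₂₂.PosDef) :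
    M.PosSemidef ↔ 0 ≤ cornerSchur M := by
  have hblocks : M.toBlocks₁₂ᴴ = M.toBlocks₂₁ :=
    (isHermitian_fromBlocks_iff.mp ((fromBlocks_toBlocks M).symm ▸ hM)).2.1
  have : Invertible M.toBlocks₂₂ := hD.isUnit.invertible
  conv_lhs => rw [← fromBlocks_toBlocks M, ← hblocks, PosDef.fromBlocks₂₂ _ _ hD,
    posSemidef_iff_nonneg_apply_unit]
  convert Iff.rfl using 2
  rw [← conjTranspose_conjTranspose M.toBlocks₁₂, hblocks]
  simp [cornerSchur, mul_apply, dotProduct, mulVec, Finset.mul_sum, Finset.sum_mul, mul_assoc]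
  exact congrArg _ Finset.sum_comm

theorem PosSemidef.sub_single_cornerSchur {M : Matrix (Unit ⊕ n) (Unit ⊕ n) ℂ}
    (hM : M.PosSemidef) (hD : M.toBlocks₂₂.PosDef) :
    (M - single (Sum.inl ()) (Sum.inl ()) (cornerSchur M)).PosSemidef := by
  have hc : IsSelfAdjoint (cornerSchur M) :=
    ((hM.1.posSemidef_iff_cornerSchur_nonneg hD).mp hM).isSelfAdjoint
  have hE : (single (Sum.inl ()) (Sum.inl ()) (cornerSchur M) :
      Matrix (Unit ⊕ n) (Unit ⊕ n) ℂ).IsHermitian := by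
    ext a b
    rcases a with ⟨⟩ | a <;> rcases b with ⟨⟩ | b <;> simp [hc.star_eq]
  rw [(hM.1.sub hE).posSemidef_iff_cornerSchur_nonneg (by simpa using hD),
    cornerSchur_sub_single_inl, sub_self]

theorem cornerSchur_le_cornerSchur_sum {ι : Type*} [Fintype ι]
    (K : ι → Matrix (Unit ⊕ n) (Unit ⊕ n) ℂ)
    (hfix : ∀ c,
      ∑ i, K i * single (Sum.inl ()) (Sum.inl ()) c * (K i)ᴴ = single (Sum.inl ()) (Sum.inl ()) c)
    {ρ : Matrix (Unit ⊕ n) (Unit ⊕ n) ℂ} (hρ : ρ.PosSemidef) (hA : ρ.toBlocks₂₂.PosDef)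
    (hB : (∑ i, K i * ρ * (K i)ᴴ).toBlocks₂₂.PosDef) :
    cornerSchur ρ ≤ cornerSchur (∑ i, K i * ρ * (K i)ᴴ) := by
  have hP := hρ.sub_single_cornerSchur hA
  have hQ :
      (∑ i, K i * ρ * (K i)ᴴ - single (Sum.inl ()) (Sum.inl ()) (cornerSchur ρ)).PosSemidef := by
    have := posSemidef_sum univ fun i _ => hP.mul_mul_conjTranspose_same (K i)
    simpa only [Matrix.mul_sub, Matrix.sub_mul, Finset.sum_sub_distrib, hfix] using this
  rw [← sub_nonneg, ← cornerSchur_sub_single_inl]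
  exact (hQ.1.posSemidef_iff_cornerSchur_nonneg (by simpa using hB)).mp hQ

end CornerSchur

end Matrix

theorem gibbs_preserving_schur_monotone_general
    (m r : ℕ) (η : Fin r → ℂ) (v : Fin r → Fin m → ℂ)
    (L : Fin r → Matrix (Fin m) (Fin m) ℂ)
    (K : Fin r → Matrix (Unit ⊕ Fin m) (Unit ⊕ Fin m) ℂ)
    (hK : ∀ i, K i = Matrix.fromBlocks (Matrix.of fun _ _ => η i)
      (Matrix.replicateRow Unit fun j => star (v i j)) 0 (L i))
    (htp : ∑ i, (K i)ᴴ * K i = 1)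
    (ρ : Matrix (Unit ⊕ Fin m) (Unit ⊕ Fin m) ℂ)
    (hρ : ρ.PosSemidef)
    (A : Matrix (Fin m) (Fin m) ℂ) (hA : A = Matrix.of fun a b => ρ (Sum.inr a) (Sum.inr b))
    (x : Fin m → ℂ) (hx : x = fun a => ρ (Sum.inr a) (Sum.inl ()))
    (hAinv : IsUnit A.det)
    (σ : Matrix (Unit ⊕ Fin m) (Unit ⊕ Fin m) ℂ)
    (hσ : σ = ∑ i, K i * ρ * (K i)ᴴ)
    (B : Matrix (Fin m) (Fin m) ℂ) (hB : B = Matrix.of fun a b => σ (Sum.inr a) (Sum.inr b))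
    (y : Fin m → ℂ) (hy : y = fun a => σ (Sum.inr a) (Sum.inl ()))
    (hBinv : IsUnit B.det) :
    (ρ (Sum.inl ()) (Sum.inl ()) - star x ⬝ᵥ A⁻¹.mulVec x).re ≤
      (σ (Sum.inl ()) (Sum.inl ()) - star y ⬝ᵥ B⁻¹.mulVec y).re := by
  subst hA hx hσ hB hy
  have hcol : ∀ i a, a ≠ Sum.inl () → K i a (Sum.inl ()) = 0 := by
    rintro i (⟨⟩ | a) ha
    · exact absurd rfl ha
    · simp [hK]
  have hσ : (∑ i, K i * ρ * (K i)ᴴ).PosSemidef :=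
    posSemidef_sum _ fun i _ => hρ.mul_mul_conjTranspose_same (K i)
  have hApd : ρ.toBlocks₂₂.PosDef :=
    (hρ.submatrix Sum.inr).posDef_iff_isUnit.mpr ((isUnit_iff_isUnit_det _).mpr hAinv)
  have hBpd : (∑ i, K i * ρ * (K i)ᴴ).toBlocks₂₂.PosDef :=
    (hσ.submatrix Sum.inr).posDef_iff_isUnit.mpr ((isUnit_iff_isUnit_det _).mpr hBinv)
  exact Complex.re_le_re <| cornerSchur_le_cornerSchur_sum K
    (sum_mul_single_mul_conjTranspose K _ hcol htp) hρ hApd hBpd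

theorem gibbs_preserving_schur_monotone
    (m r : ℕ) (η : Fin r → ℂ) (v : Fin r → Fin m → ℂ)
    (L : Fin r → Matrix (Fin m) (Fin m) ℂ)
    (K : Fin r → Matrix (Unit ⊕ Fin m) (Unit ⊕ Fin m) ℂ)
    (hK : ∀ i, K i = Matrix.fromBlocks (Matrix.of fun _ _ => η i)
      (Matrix.replicateRow Unit fun j => star (v i j)) 0 (L i))
    (htp : ∑ i, (K i)ᴴ * K i = 1)
    (ρ : Matrix (Unit ⊕ Fin m) (Unit ⊕ Fin m) ℂ)
    (hρ : ρ.PosSemidef) (hρtr : ρ.trace = 1)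
    (A : Matrix (Fin m) (Fin m) ℂ) (hA : A = Matrix.of fun a b => ρ (Sum.inr a) (Sum.inr b))
    (x : Fin m → ℂ) (hx : x = fun a => ρ (Sum.inr a) (Sum.inl ()))
    (hAinv : IsUnit A.det)
    (σ : Matrix (Unit ⊕ Fin m) (Unit ⊕ Fin m) ℂ)
    (hσ : σ = ∑ i, K i * ρ * (K i)ᴴ)
    (B : Matrix (Fin m) (Fin m) ℂ) (hB : B = Matrix.of fun a b => σ (Sum.inr a) (Sum.inr b))
    (y : Fin m → ℂ) (hy : y = fun a => σ (Sum.inr a) (Sum.inl ()))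
    (hBinv : IsUnit B.det) :
    (ρ (Sum.inl ()) (Sum.inl ()) - star x ⬝ᵥ A⁻¹.mulVec x).re ≤
      (σ (Sum.inl ()) (Sum.inl ()) - star y ⬝ᵥ B⁻¹.mulVec y).re :=
  gibbs_preserving_schur_monotone_general m r η v L K hK htp ρ hρ A hA x hx hAinv σ hσ B hB y hy
    hBinv
end

section
/- For d = 2: let ρ = [[α, x̄],[x, 1−α]] and σ = [[β, ȳ],[y, 1−β]] be 2×2 density matrices with α < 1 and β < 1. If β ≥ α and β − |y|²/(1−β) ≥ α − |x|²/(1−α), then there exists a CPTP map E with E(|1⟩⟨1|) = |1⟩⟨1| and E(ρ) = σ. -/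
/-!
A Kraus operator fixing `|0⟩⟨0|` must be upper triangular. Two of them suffice:
`K₁ = !![z̄₁, s z̄₂; 0, c]` and `K₂ = !![z₂, -s z₁; 0, 0]`, with `c² = (1 - β)/(1 - α)`,
`s² = (β - α)/(1 - α)` and `‖z₁‖² + ‖z₂‖² = 1`. This channel lowers the excited population
`1 - α` to `1 - β` and sends the coherence `x` to `c (x z₁ + (1 - α) s z₂)`. A unit vector
`(z₁, z₂)` making this equal to `y` exists as soon as `‖y‖²/c² ≤ ‖x‖² + (1 - α)² s²`,
which is the Schur-complement condition `h2`.
-/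

open Matrix
open scoped ComplexOrder ComplexConjugate

theorem Matrix.conjTranspose_fin_two {α : Type*} [Star α] (a b c d : α) :
    (!![a, b; c, d])ᴴ = !![star a, star c; star b, star d] := by
  ext i j; fin_cases i <;> fin_cases j <;> rfl

theorem Matrix.add_fin_two {α : Type*} [Add α] (a b c d a' b' c' d' : α) :
    !![a, b; c, d] + !![a', b'; c', d'] = !![a + a', b + b'; c + c', d + d'] := by
  ext i j; fin_cases i <;> fin_cases j <;> rfl

theorem Matrix.fin_two_eq_iff {α : Type*} (a b c d a' b' c' d' : α) :
    !![a, b; c, d] = !![a', b'; c', d'] ↔ (a = a' ∧ b = b') ∧ c = c' ∧ d = d' := by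
  simp only [EmbeddingLike.apply_eq_iff_eq, vecCons_inj, and_true]

theorem Complex.exists_norm_sq_add_norm_sq_eq_one_and_mul_add_mul_eq (w₁ w₂ T : ℂ)
    (hT : ‖T‖ ^ 2 ≤ ‖w₁‖ ^ 2 + ‖w₂‖ ^ 2) :
    ∃ z₁ z₂ : ℂ, ‖z₁‖ ^ 2 + ‖z₂‖ ^ 2 = 1 ∧ w₁ * z₁ + w₂ * z₂ = T := by
  set N := ‖w₁‖ ^ 2 + ‖w₂‖ ^ 2 with hN
  rcases (by positivity : 0 ≤ N).eq_or_lt with hN0 | hNpos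
  · have hw₁ : w₁ = 0 := by
      rw [← norm_eq_zero]; nlinarith [sq_nonneg ‖w₂‖, norm_nonneg w₁]
    have hT : T = 0 := by
      rw [← norm_eq_zero]; nlinarith [norm_nonneg T]
    exact ⟨1, 0, by simp, by simp [hw₁, hT]⟩
  -- `z = (T / N) w̄ + μ (-w₂, w₁)`, where `(-w₂, w₁)` is orthogonal to `w̄` and `μ` normalises `z`
  set μ : ℝ := √(N - ‖T‖ ^ 2) / N
  have hμ : (μ : ℂ) ^ 2 * (N : ℂ) ^ 2 = N - conj T * T := by
    rw [Complex.conj_mul']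
    exact_mod_cast show μ ^ 2 * N ^ 2 = N - ‖T‖ ^ 2 by
      rw [div_pow, Real.sq_sqrt (by linarith)]; field_simp
  have hwC : conj w₁ * w₁ + conj w₂ * w₂ = (N : ℂ) := by
    rw [Complex.conj_mul', Complex.conj_mul', hN]; push_cast; ring
  have hNC : (N : ℂ) ≠ 0 := by exact_mod_cast hNpos.ne'
  refine ⟨T / N * conj w₁ - μ * w₂, T / N * conj w₂ + μ * w₁, ?_, ?_⟩
  · apply Complex.ofReal_injective
    push_cast
    rw [← Complex.conj_mul', ← Complex.conj_mul']
    simp only [map_sub, map_add, map_mul, map_div₀, Complex.conj_conj, Complex.conj_ofReal]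
    field_simp
    linear_combination (conj T * T + (μ : ℂ) ^ 2 * (N : ℂ) ^ 2) * hwC + (N : ℂ) * hμ
  · field_simp
    linear_combination T * hwC

def dampingKraus (z₁ z₂ : ℂ) (c s : ℝ) : Fin 2 → Matrix (Fin 2) (Fin 2) ℂ :=
  ![!![star z₁, s * star z₂; 0, c], !![z₂, -(s * z₁); 0, 0]]

section dampingKraus

variable {z₁ z₂ : ℂ} (c s : ℝ)

lemma conj_mul_add_conj_mul_eq_one (hz : ‖z₁‖ ^ 2 + ‖z₂‖ ^ 2 = 1) :
    conj z₁ * z₁ + conj z₂ * z₂ = 1 := by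
  rw [Complex.conj_mul', Complex.conj_mul']
  exact_mod_cast hz

lemma dampingKraus_sum_conjTranspose_mul_self (hz : ‖z₁‖ ^ 2 + ‖z₂‖ ^ 2 = 1)
    (hcs : c ^ 2 + s ^ 2 = 1) :
    ∑ i, (dampingKraus z₁ z₂ c s i)ᴴ * dampingKraus z₁ z₂ c s i = 1 := by
  have hzC := conj_mul_add_conj_mul_eq_one hz
  have hcsC : (c : ℂ) ^ 2 + (s : ℂ) ^ 2 = 1 := by exact_mod_cast hcs
  simp only [dampingKraus, Fin.sum_univ_two, cons_val_zero, cons_val_one, conjTranspose_fin_two,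
    mul_fin_two, add_fin_two, one_fin_two, fin_two_eq_iff, Complex.star_def, map_mul, map_neg,
    map_zero, Complex.conj_conj, Complex.conj_ofReal]
  refine ⟨⟨?_, ?_⟩, ?_, ?_⟩
  · linear_combination hzC
  · ring
  · ring
  · linear_combination (s : ℂ) ^ 2 * hzC + hcsC

lemma dampingKraus_sum_mul_mul_conjTranspose (hz : ‖z₁‖ ^ 2 + ‖z₂‖ ^ 2 = 1) (p q : ℝ) (x : ℂ) :
    ∑ i, dampingKraus z₁ z₂ c s i * !![(p : ℂ), star x; x, (q : ℂ)] * (dampingKraus z₁ z₂ c s i)ᴴ =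
      !![((p + s ^ 2 * q : ℝ) : ℂ), star (c * (x * z₁ + q * s * z₂));
        c * (x * z₁ + q * s * z₂), ((c ^ 2 * q : ℝ) : ℂ)] := by
  have hzC := conj_mul_add_conj_mul_eq_one hz
  simp only [dampingKraus, Fin.sum_univ_two, cons_val_zero, cons_val_one, conjTranspose_fin_two,
    mul_fin_two, add_fin_two, fin_two_eq_iff, Complex.star_def, map_mul, map_neg,
    map_zero, map_add, Complex.conj_conj, Complex.conj_ofReal]
  push_cast
  refine ⟨⟨?_, ?_⟩, ?_, ?_⟩
  · linear_combination ((p : ℂ) + s ^ 2 * q) * hzC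
  · ring
  · ring
  · ring

end dampingKraus

theorem two_level_gibbs_preserving_sufficient_general
    (α β : ℝ) (x y : ℂ) (hα : α < 1) (hβ : β < 1)
    (ρ σ : Matrix (Fin 2) (Fin 2) ℂ)
    (hρ : ρ = !![(α : ℂ), star x; x, ((1 - α : ℝ) : ℂ)])
    (hσ : σ = !![(β : ℂ), star y; y, ((1 - β : ℝ) : ℂ)])
    (h1 : α ≤ β)
    (h2 : α - ‖x‖ ^ 2 / (1 - α) ≤ β - ‖y‖ ^ 2 / (1 - β)) :
    ∃ (r : ℕ) (K : Fin r → Matrix (Fin 2) (Fin 2) ℂ),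
      (∑ i, (K i)ᴴ * K i = 1) ∧
      (∑ i, K i * (!![1, 0; 0, 0] : Matrix (Fin 2) (Fin 2) ℂ) * (K i)ᴴ = !![1, 0; 0, 0]) ∧
      (∑ i, K i * ρ * (K i)ᴴ = σ) := by
  have hA : 0 < 1 - α := by linarith
  have hB : 0 < 1 - β := by linarith
  set c := √((1 - β) / (1 - α))
  set s := √((β - α) / (1 - α))
  have hc : c ^ 2 = (1 - β) / (1 - α) := Real.sq_sqrt (by positivity)
  have hs : s ^ 2 = (β - α) / (1 - α) := Real.sq_sqrt (div_nonneg (by linarith) hA.le)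
  have hc0 : 0 < c := Real.sqrt_pos.2 (by positivity)
  have hcs : c ^ 2 + s ^ 2 = 1 := by
    rw [hc, hs]; field_simp; ring
  have hbound : ‖y / c‖ ^ 2 ≤ ‖x‖ ^ 2 + ‖(((1 - α) * s : ℝ) : ℂ)‖ ^ 2 := by
    rw [norm_div, Complex.norm_real, Complex.norm_real, Real.norm_of_nonneg hc0.le,
      Real.norm_eq_abs, sq_abs, div_pow, div_le_iff₀ (by positivity), mul_pow, hc, hs]
    calc ‖y‖ ^ 2 ≤ (‖x‖ ^ 2 / (1 - α) + (β - α)) * (1 - β) := by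
          rw [← div_le_iff₀ hB]; linarith
      _ = _ := by field_simp
  obtain ⟨z₁, z₂, hz, hzy⟩ :=
    Complex.exists_norm_sq_add_norm_sq_eq_one_and_mul_add_mul_eq x _ _ hbound
  have hy : (c : ℂ) * (x * z₁ + ((1 - α : ℝ) : ℂ) * s * z₂) = y := by
    rw [← Complex.ofReal_mul, hzy, mul_div_cancel₀ _ (by exact_mod_cast hc0.ne')]
  refine ⟨2, dampingKraus z₁ z₂ c s, dampingKraus_sum_conjTranspose_mul_self c s hz hcs, ?_, ?_⟩
  · simpa using dampingKraus_sum_mul_mul_conjTranspose c s hz 1 0 0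
  · rw [hρ, hσ, dampingKraus_sum_mul_mul_conjTranspose c s hz α (1 - α) x, hy, hc, hs,
      div_mul_cancel₀ _ hA.ne', div_mul_cancel₀ _ hA.ne', add_sub_cancel]

theorem two_level_gibbs_preserving_sufficient
    (α β : ℝ) (x y : ℂ) (hα : α < 1) (hβ : β < 1)
    (ρ σ : Matrix (Fin 2) (Fin 2) ℂ)
    (hρ : ρ = !![(α : ℂ), star x; x, ((1 - α : ℝ) : ℂ)])
    (hσ : σ = !![(β : ℂ), star y; y, ((1 - β : ℝ) : ℂ)])
    (hρpsd : ρ.PosSemidef) (hσpsd : σ.PosSemidef)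
    (h1 : α ≤ β)
    (h2 : α - ‖x‖ ^ 2 / (1 - α) ≤ β - ‖y‖ ^ 2 / (1 - β)) :
    ∃ (r : ℕ) (K : Fin r → Matrix (Fin 2) (Fin 2) ℂ),
      (∑ i, (K i)ᴴ * K i = 1) ∧
      (∑ i, K i * (!![1, 0; 0, 0] : Matrix (Fin 2) (Fin 2) ℂ) * (K i)ᴴ = !![1, 0; 0, 0]) ∧
      (∑ i, K i * ρ * (K i)ᴴ = σ) :=
  two_level_gibbs_preserving_sufficient_general α β x y hα hβ ρ σ hρ hσ h1 h2
end

section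
/- Let ρ, σ be d×d density matrices with ρ_{jk} ≠ 0 for all j,k, satisfying: (i) the diagonal of ρ UT-majorizes that of σ, and (ii) Q defined by Q_{jj} = min(σ_{jj}/ρ_{jj},1), Q_{jk} = σ_{jk}/ρ_{jk} (j≠k) is positive-semidefinite of rank 1. Then for any density matrix σ' with σ'_{jj} = σ_{jj} for all j such that ρ ↦ σ' is achievable by a cooling map, it holds that |σ'_{jk}| ≤ |σ_{jk}| for all j ≠ k. -/
/-!
Off the diagonal a cooling map acts by `σ'_{ab} = ⟪λ_b, λ_a⟫ ρ_{ab}`, the jump operators `|j⟩⟨k|`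
only feeding the diagonal. Comparing diagonals gives `‖λ_a‖² ρ_{aa} ≤ σ_{aa}`, and trace
preservation on `|a⟩⟨a|` gives `‖λ_a‖² ≤ 1`, so `‖λ_a‖² ≤ Q_{aa}`. As `Q` is Hermitian of rank one,
`Q_{aa} Q_{bb} = |Q_{ab}|² = |σ_{ab} / ρ_{ab}|²`, and Cauchy–Schwarz yields
`|σ'_{ab}| ≤ ‖λ_a‖ ‖λ_b‖ |ρ_{ab}| ≤ |σ_{ab}|`.
-/

open Finset Matrix
open scoped ComplexOrder

theorem Matrix.mul_apply_eq_mul_apply_of_rank_le_one {m n K : Type*} [Fintype n] [Field K]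
    {A : Matrix m n K} (hA : A.rank ≤ 1) (i i' : m) (j j' : n) :
    A i j * A i' j' = A i j' * A i' j := by
  classical
  obtain ⟨v, hv⟩ := finrank_le_one_iff.mp hA
  have hcol : ∀ j, ∃ c : K, ∀ i, A i j = c * v.1 i := fun j => by
    obtain ⟨c, hc⟩ := hv ⟨A *ᵥ Pi.single j 1, Pi.single j 1, rfl⟩
    exact ⟨c, fun i => by simpa [mulVec_single] using (congrFun (congrArg Subtype.val hc) i).symm⟩
  obtain ⟨c, hc⟩ := hcol j
  obtain ⟨c', hc'⟩ := hcol j'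
  rw [hc, hc, hc', hc']
  ring

theorem Matrix.IsHermitian.norm_apply_sq_of_rank_le_one {n 𝕜 : Type*} [Fintype n] [RCLike 𝕜]
    {A : Matrix n n 𝕜} (hA : A.IsHermitian) (hr : A.rank ≤ 1) (i j : n) :
    ‖A i j‖ ^ 2 = RCLike.re (A i i) * RCLike.re (A j j) := by
  have h := mul_apply_eq_mul_apply_of_rank_le_one hr i j i j
  rw [← hA.apply j i, ← hA.coe_re_apply_self i, ← hA.coe_re_apply_self j, RCLike.star_def,
    RCLike.mul_conj] at h
  exact_mod_cast h.symm

open scoped InnerProductSpace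

section CoolingKraus

variable {ι κ : Type*} [Fintype ι] [LinearOrder ι] [Fintype κ]
  (lam : ι → κ → ℂ) (mu : ι → ι → ℂ)

def coolingKraus (M : Matrix ι ι ℂ) : Matrix ι ι ℂ :=
  (∑ i, (Matrix.diagonal fun j => lam j i) * M * (Matrix.diagonal fun j => lam j i)ᴴ) +
    ∑ j, ∑ k, if j < k then
      (mu j k • Matrix.single j k (1 : ℂ)) * M * (mu j k • Matrix.single j k (1 : ℂ))ᴴ
    else 0

/-- The paper's `λ_a`: the `a`-th diagonal entries of the diagonal Kraus operators. -/
def diagKrausVec (a : ι) : EuclideanSpace ℂ κ :=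
  WithLp.toLp 2 (lam a)

theorem coolingKraus_apply (M : Matrix ι ι ℂ) (a b : ι) :
    coolingKraus lam mu M a b = ⟪diagKrausVec lam b, diagKrausVec lam a⟫_ℂ * M a b +
      if a = b then ∑ k with a < k, ((‖mu a k‖ ^ 2 : ℝ) : ℂ) * M k k else 0 := by
  have hdiag : ∀ i, ((diagonal fun j => lam j i) * M * (diagonal fun j => lam j i)ᴴ) a b =
      lam a i * star (lam b i) * M a b := fun i => by
    simp [diagonal_conjTranspose, mul_right_comm]
  have hjump : ∀ j k, (mu j k • single j k (1 : ℂ)) * M * (mu j k • single j k (1 : ℂ))ᴴ =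
      single j j (((‖mu j k‖ ^ 2 : ℝ) : ℂ) * M k k) := fun j k => by
    simp [conjTranspose_single, mul_right_comm _ (M k k), Complex.mul_conj']
  simp only [coolingKraus, hdiag, hjump, Matrix.add_apply, Matrix.sum_apply, ← Finset.sum_mul,
    Matrix.ite_apply, Matrix.zero_apply]
  congr 1
  rw [Finset.sum_eq_single a (fun j _ hja => by simp [single_apply_of_row_ne hja]) (by simp)]
  split_ifs with hab
  · subst hab
    simp [Finset.sum_filter]
  · simp [single_apply_of_col_ne _ _ hab]

theorem coolingKraus_apply_of_ne (M : Matrix ι ι ℂ) {a b : ι} (hab : a ≠ b) :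
    coolingKraus lam mu M a b = ⟪diagKrausVec lam b, diagKrausVec lam a⟫_ℂ * M a b := by
  rw [coolingKraus_apply, if_neg hab, add_zero]

theorem norm_diagKrausVec_sq_mul_le_re_coolingKraus_apply_self {M : Matrix ι ι ℂ}
    (hM : ∀ k, 0 ≤ (M k k).re) (a : ι) :
    ‖diagKrausVec lam a‖ ^ 2 * (M a a).re ≤ (coolingKraus lam mu M a a).re := by
  have hjump : 0 ≤ ∑ k with a < k, (((‖mu a k‖ ^ 2 : ℝ) : ℂ) * M k k).re :=
    sum_nonneg fun k _ => by
      rw [Complex.re_ofReal_mul]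
      exact mul_nonneg (sq_nonneg _) (hM k)
  have hself :
      ⟪diagKrausVec lam a, diagKrausVec lam a⟫_ℂ = ((‖diagKrausVec lam a‖ ^ 2 : ℝ) : ℂ) := by
    exact_mod_cast inner_self_eq_norm_sq_to_K (𝕜 := ℂ) (diagKrausVec lam a)
  rw [coolingKraus_apply, if_pos rfl, hself, Complex.add_re, Complex.re_sum,
    Complex.re_ofReal_mul]
  exact le_add_of_nonneg_right hjump

theorem norm_diagKrausVec_sq_le_one
    (htr : ∀ M, (coolingKraus lam mu M).trace = M.trace) (c : ι) :
    ‖diagKrausVec lam c‖ ^ 2 ≤ 1 := by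
  set P : Matrix ι ι ℂ := single c c 1
  have hP : ∀ k, 0 ≤ (P k k).re := fun k => by
    by_cases hk : c = k <;> simp [P, hk]
  have hdiag_nonneg : ∀ a, 0 ≤ (coolingKraus lam mu P a a).re := fun a =>
    (mul_nonneg (sq_nonneg _) (hP a)).trans
      (norm_diagKrausVec_sq_mul_le_re_coolingKraus_apply_self lam mu hP a)
  calc ‖diagKrausVec lam c‖ ^ 2 = ‖diagKrausVec lam c‖ ^ 2 * (P c c).re := by simp [P]
    _ ≤ (coolingKraus lam mu P c c).re :=
      norm_diagKrausVec_sq_mul_le_re_coolingKraus_apply_self lam mu hP c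
    _ ≤ ∑ a, (coolingKraus lam mu P a a).re :=
      Finset.single_le_sum (fun a _ => hdiag_nonneg a) (mem_univ c)
    _ = 1 := by
      rw [← Complex.re_sum]
      change (coolingKraus lam mu P).trace.re = 1
      simp [htr, P]

theorem norm_diagKrausVec_sq_le_min
    (htr : ∀ M, (coolingKraus lam mu M).trace = M.trace) {ρ : Matrix ι ι ℂ}
    (hρ : ρ.PosSemidef) {c : ι} (hρc : ρ c c ≠ 0) :
    ‖diagKrausVec lam c‖ ^ 2 ≤ min ((coolingKraus lam mu ρ c c).re / (ρ c c).re) 1 := by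
  have hρ_re_pos : 0 < (ρ c c).re :=
    (Complex.pos_iff.1 (lt_of_le_of_ne hρ.diag_nonneg hρc.symm)).1
  refine le_min ((le_div_iff₀ hρ_re_pos).2 ?_) (norm_diagKrausVec_sq_le_one lam mu htr c)
  exact norm_diagKrausVec_sq_mul_le_re_coolingKraus_apply_self lam mu
    (fun _ => (Complex.nonneg_iff.1 hρ.diag_nonneg).1) c

end CoolingKraus

theorem optimal_coherence_transfer_general
    (d : ℕ) (ρ σ : Matrix (Fin d) (Fin d) ℂ)
    (hρ : ρ.PosSemidef)
    (hρne : ∀ j k, ρ j k ≠ 0)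
    (Q : Matrix (Fin d) (Fin d) ℂ)
    (hQ : ∀ j k : Fin d, Q j k =
      if j = k then ((min ((σ j j).re / (ρ j j).re) 1 : ℝ) : ℂ)
      else σ j k / ρ j k)
    (hQpsd : Q.PosSemidef) (hQrank : Q.rank = 1)
    (σ' : Matrix (Fin d) (Fin d) ℂ)
    (hdiag : ∀ j : Fin d, σ' j j = σ j j)
    (E : Matrix (Fin d) (Fin d) ℂ → Matrix (Fin d) (Fin d) ℂ)
    (hE : IsCoolingMap E) (hEρ : E ρ = σ') :
    ∀ j k : Fin d, j ≠ k → ‖σ' j k‖ ≤ ‖σ j k‖ := by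
  obtain ⟨n, lam, mu, hkraus, htr⟩ := hE
  have hEkraus : ∀ M, E M = coolingKraus lam mu M := hkraus
  have hσ' : σ' = coolingKraus lam mu ρ := hEρ ▸ hEkraus ρ
  set v := diagKrausVec lam
  have hv : ∀ c, ‖v c‖ ^ 2 ≤ (Q c c).re := fun c => by
    rw [hQ, if_pos rfl, Complex.ofReal_re, ← hdiag, hσ']
    exact norm_diagKrausVec_sq_le_min lam mu (fun M => hEkraus M ▸ htr M) hρ (hρne c c)
  intro a b hab
  have hvQ : ‖v b‖ * ‖v a‖ ≤ ‖Q a b‖ := by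
    rw [← pow_le_pow_iff_left₀ (by positivity) (norm_nonneg _) two_ne_zero, mul_pow,
      hQpsd.isHermitian.norm_apply_sq_of_rank_le_one hQrank.le, mul_comm]
    exact mul_le_mul (hv a) (hv b) (sq_nonneg _) ((sq_nonneg _).trans (hv a))
  calc ‖σ' a b‖ = ‖⟪v b, v a⟫_ℂ‖ * ‖ρ a b‖ := by
        rw [hσ', coolingKraus_apply_of_ne lam mu ρ hab, norm_mul]
    _ ≤ ‖v b‖ * ‖v a‖ * ‖ρ a b‖ := by gcongr; exact norm_inner_le_norm _ _
    _ ≤ ‖Q a b‖ * ‖ρ a b‖ := by gcongr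
    _ = ‖σ a b‖ := by
        rw [hQ, if_neg hab, norm_div, div_mul_cancel₀ _ (norm_ne_zero_iff.2 (hρne a b))]

theorem optimal_coherence_transfer
    (d : ℕ) (ρ σ : Matrix (Fin d) (Fin d) ℂ)
    (hρ : ρ.PosSemidef) (hρtr : ρ.trace = 1)
    (hσ : σ.PosSemidef) (hσtr : σ.trace = 1)
    (hρne : ∀ j k, ρ j k ≠ 0)
    (Q : Matrix (Fin d) (Fin d) ℂ)
    (hQ : ∀ j k : Fin d, Q j k =
      if j = k then ((min ((σ j j).re / (ρ j j).re) 1 : ℝ) : ℂ)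
      else σ j k / ρ j k)
    (hmaj : ∀ m : Fin d, 1 ≤ m.val →
      ∑ j ∈ univ.filter (fun j => m ≤ j), (σ j j).re ≤
        ∑ j ∈ univ.filter (fun j => m ≤ j), (ρ j j).re)
    (hQpsd : Q.PosSemidef) (hQrank : Q.rank = 1)
    (σ' : Matrix (Fin d) (Fin d) ℂ)
    (hσ' : σ'.PosSemidef) (hσ'tr : σ'.trace = 1)
    (hdiag : ∀ j : Fin d, σ' j j = σ j j)
    (E : Matrix (Fin d) (Fin d) ℂ → Matrix (Fin d) (Fin d) ℂ)
    (hE : IsCoolingMap E) (hEρ : E ρ = σ') :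
    ∀ j k : Fin d, j ≠ k → ‖σ' j k‖ ≤ ‖σ j k‖ :=
  optimal_coherence_transfer_general d ρ σ hρ hρne Q hQ hQpsd hQrank σ' hdiag E hE hEρ
end
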